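/- For every Lebesgue-measurable threshold function f : [0,1] → [0,1], the supremum, over all integers n ≥ 1 and all instances 1 ≥ x_1 ≥ x_2 ≥ … ≥ x_n ≥ 0, of the regret of the pricing curve with threshold f is at least 1/4. -/

import Mathlib

open MeasureTheory

/-- The value received by the pricing-curve algorithm with threshold function `f` on the
instance `x`, when value `x i` arrives at time `t i`: it receives `x i` for the index `i`
with the smallest arrival time among all indices `j` with `x j ≥ f (t j)`, and `0` if no
index clears the threshold. -/
noncomputable def pricingReceived {n : ℕ} (f : ℝ → ℝ) (x t : Fin n → ℝ) : ℝ :=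
  if h : (Finset.univ.filter fun j : Fin n => f (t j) ≤ x j).Nonempty then
    x (Classical.choose (Finset.exists_min_image _ t h))
  else 0

/-- The regret of the pricing curve with threshold function `f` on the instance
`x 0 ≥ x 1 ≥ … ≥ x n`: the top value `x 0` minus the expected received value, where the
arrival times are i.i.d. uniform on `[0,1]`. -/
noncomputable def pricingRegret {n : ℕ} (f : ℝ → ℝ) (x : Fin (n + 1) → ℝ) : ℝ :=
  x 0 - ∫ t in Set.univ.pi (fun _ : Fin (n + 1) => Set.Icc (0 : ℝ) 1), pricingReceived f x t

/-!
Let `c` be the measure of the times `s ≤ 1/2` with `f s ≤ 1/2`. If `c = 0`, the single value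
`1/2` is received only when it arrives at a time in `[0,1]` where `f ≤ 1/2`, a set of measure at
most `1/2`, so its regret is at least `1/4`. If `c > 0`, take the instance `1, 1/2, …, 1/2` with
`n` halves: with probability `1/2` the top value arrives after time `1/2`, and independently, with
probability `1 - (1 - c)^n`, some `1/2` arrives before it at such a cheap time and is accepted.
The regret is then at least `(1 - (1 - c)^n)/4`, which tends to `1/4`.
-/

open MeasureTheory Set Filter Topology
open scoped ENNReal

section

variable {n : ℕ} {f : ℝ → ℝ}

lemma pricingReceived_nonneg {x : Fin n → ℝ} (hx : ∀ i, 0 ≤ x i) (t : Fin n → ℝ) :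
    0 ≤ pricingReceived f x t := by
  unfold pricingReceived
  split
  · exact hx _
  · exact le_rfl

lemma pricingReceived_le {x : Fin n → ℝ} {M : ℝ} (hx : ∀ i, x i ≤ M) (hM : 0 ≤ M)
    (t : Fin n → ℝ) : pricingReceived f x t ≤ M := by
  unfold pricingReceived
  split
  · exact hx _
  · exact hM

lemma pricingReceived_eq_zero {x t : Fin n → ℝ} (h : ∀ j, x j < f (t j)) :
    pricingReceived f x t = 0 := by
  rw [pricingReceived, dif_neg]
  simpa [Finset.filter_nonempty_iff] using h

lemma pricingReceived_le_of_clears_before {x t : Fin n → ℝ} {j k : Fin n} {M : ℝ}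
    (hj : f (t j) ≤ x j) (hjk : t j < t k) (hM : ∀ i ≠ k, x i ≤ M) :
    pricingReceived f x t ≤ M := by
  have hne : (Finset.univ.filter fun j : Fin n => f (t j) ≤ x j).Nonempty := ⟨j, by simpa⟩
  rw [pricingReceived, dif_pos hne]
  obtain ⟨-, hmin⟩ := Classical.choose_spec (Finset.exists_min_image _ t hne)
  refine hM _ fun hk => ?_
  have := hmin j (by simpa)
  rw [hk] at this
  exact this.not_gt hjk

lemma pricingRegret_le {x : Fin (n + 1) → ℝ} (hx : ∀ i, 0 ≤ x i) :
    pricingRegret f x ≤ x 0 :=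
  sub_le_self _ (integral_nonneg (pricingReceived_nonneg hx))

lemma mul_volume_real_le_pricingRegret {x : Fin (n + 1) → ℝ} (hx : Antitone x)
    (hlast : 0 ≤ x (Fin.last n))
    {B : Set (Fin (n + 1) → ℝ)} (hB : MeasurableSet B) (hBC : B ⊆ univ.pi fun _ => Icc 0 1)
    {b : ℝ} (hb : ∀ t ∈ B, pricingReceived f x t ≤ x 0 - b) :
    b * volume.real B ≤ pricingRegret f x := by
  set C : Set (Fin (n + 1) → ℝ) := univ.pi fun _ => Icc 0 1
  have hC : volume C = 1 := by simp [C, Real.volume_Icc_pi]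
  have : IsFiniteMeasure (volume.restrict C) := isFiniteMeasure_restrict.mpr (by simp [hC])
  have hnonneg : ∀ i, 0 ≤ x i := fun i => hlast.trans (hx (Fin.le_last i))
  have hbound : ∀ t, pricingReceived f x t ≤ x 0 - B.indicator (fun _ => b) t := by
    intro t
    by_cases ht : t ∈ B
    · simpa [indicator_of_mem ht] using hb t ht
    · simpa [indicator_of_notMem ht] using
        pricingReceived_le (fun i => hx (Fin.zero_le i)) (hnonneg 0) t
  have hind : Integrable (B.indicator fun _ => b) (volume.restrict C) :=
    (integrable_const _).indicator hB
  have hint : ∫ t in C, pricingReceived f x t ≤ x 0 - b * volume.real B := calc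
    _ ≤ ∫ t in C, (x 0 - B.indicator (fun _ => b) t) :=
        integral_mono_of_nonneg (ae_of_all _ (pricingReceived_nonneg hnonneg))
          ((integrable_const _).sub hind) (ae_of_all _ hbound)
    _ = x 0 - b * volume.real B := by
        rw [integral_sub (integrable_const _) hind, setIntegral_const,
          integral_indicator_const _ hB, measureReal_restrict_apply hB, inter_eq_left.mpr hBC,
          measureReal_def, hC]
        simp [mul_comm]
  rw [pricingRegret]
  linarith

lemma volume_real_setOf_fin_one_apply_mem (J : Set ℝ) :
    volume.real {t : Fin 1 → ℝ | t 0 ∈ J} = volume.real J := by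
  simp only [measureReal_def]
  exact congrArg ENNReal.toReal ((volume_preserving_funUnique (Fin 1) ℝ).measure_preimage_equiv J)

lemma volume_real_cons_pi (I T : Set ℝ) :
    volume.real (univ.pi (Fin.cons I (fun _ => T) : Fin (n + 1) → Set ℝ)) =
      volume.real I * volume.real T ^ n := by
  simp [measureReal_def, volume_pi_pi, Fin.prod_univ_succ]

lemma volume_real_cons_exists_mem {I S K : Set ℝ} (hI : MeasurableSet I) (hS : MeasurableSet S)
    (hK : MeasurableSet K) (hIfin : volume I ≠ ∞) (hSfin : volume S ≠ ∞) :
    volume.real {t : Fin (n + 1) → ℝ |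
        t 0 ∈ I ∧ (∀ i : Fin n, t i.succ ∈ S) ∧ ∃ j : Fin n, t j.succ ∈ K} =
      volume.real I * (volume.real S ^ n - volume.real (S \ K) ^ n) := by
  set P : Set (Fin (n + 1) → ℝ) := univ.pi (Fin.cons I fun _ => S)
  set Q : Set (Fin (n + 1) → ℝ) := univ.pi (Fin.cons I fun _ => S \ K)
  have hQP : Q ⊆ P := pi_mono fun i _ => Fin.cases subset_rfl (fun _ => sdiff_subset) i
  have hQ : MeasurableSet Q := MeasurableSet.univ_pi fun i => Fin.cases hI (fun _ => hS.diff hK) i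
  have hP : volume P ≠ ∞ := by
    simp [P, volume_pi_pi, Fin.prod_univ_succ, ENNReal.mul_ne_top, hIfin, hSfin]
  have hset : {t : Fin (n + 1) → ℝ |
      t 0 ∈ I ∧ (∀ i : Fin n, t i.succ ∈ S) ∧ ∃ j : Fin n, t j.succ ∈ K} = P \ Q := by
    ext t
    simp only [P, Q, mem_ofPred_eq, Set.mem_sdiff, mem_univ_pi, Fin.forall_fin_succ, Fin.cons_zero,
      Fin.cons_succ, not_and, not_forall, not_not]
    tauto
  rw [hset, measureReal_sdiff hQP hQ hP, volume_real_cons_pi, volume_real_cons_pi, mul_sub]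

def cheapEarlyTimes (f : ℝ → ℝ) : Set ℝ := Icc 0 (1 / 2) ∩ {s | f s ≤ 1 / 2}

lemma measurableSet_cheapEarlyTimes (hf : Measurable f) : MeasurableSet (cheapEarlyTimes f) :=
  measurableSet_Icc.inter (measurableSet_le hf measurable_const)

lemma cheapEarlyTimes_subset : cheapEarlyTimes f ⊆ Icc 0 (1 / 2) := inter_subset_left

lemma volume_real_cheapEarlyTimes_le : volume.real (cheapEarlyTimes f) ≤ 1 / 2 := by
  calc volume.real (cheapEarlyTimes f) ≤ volume.real (Icc (0 : ℝ) (1 / 2)) :=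
        measureReal_mono cheapEarlyTimes_subset (by simp)
    _ = 1 / 2 := by simp

lemma le_pricingRegret_const_half (hf : Measurable f) :
    (1 / 2 - volume.real (cheapEarlyTimes f)) / 2 ≤
      pricingRegret f (fun _ : Fin 1 => (1 / 2 : ℝ)) := by
  set J : Set ℝ := Icc 0 1 ∩ {s | 1 / 2 < f s}
  have hJ : MeasurableSet J := measurableSet_Icc.inter (measurableSet_lt measurable_const hf)
  have hJvol : 1 / 2 - volume.real (cheapEarlyTimes f) ≤ volume.real J := calc
    _ = volume.real (Icc 0 (1 / 2) \ cheapEarlyTimes f) := by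
        rw [measureReal_sdiff cheapEarlyTimes_subset (measurableSet_cheapEarlyTimes hf) (by simp)]
        simp
    _ ≤ volume.real J := by
        refine measureReal_mono (fun s ⟨⟨h0, h1⟩, hs⟩ => ⟨⟨h0, by linarith⟩, ?_⟩)
          (measure_ne_top_of_subset inter_subset_left (by simp))
        exact not_le.mp fun (h : f s ≤ 1 / 2) => hs ⟨⟨h0, h1⟩, h⟩
  have hreg := mul_volume_real_le_pricingRegret (f := f) (x := fun _ : Fin 1 => (1 / 2 : ℝ))
    antitone_const (by norm_num) (B := {t | t 0 ∈ J}) (measurable_pi_apply 0 hJ) (b := 1 / 2)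
    (fun t ht => mem_univ_pi.mpr fun i => Fin.fin_one_eq_zero i ▸ ht.1)
    (fun t ht => by
      rw [pricingReceived_eq_zero (by simpa [Fin.forall_fin_one] using ht.2)]
      norm_num)
  rw [volume_real_setOf_fin_one_apply_mem] at hreg
  linarith

noncomputable def oneThenHalves (n : ℕ) : Fin (n + 1) → ℝ := Fin.cons 1 fun _ => 1 / 2

@[simp] lemma oneThenHalves_zero : oneThenHalves n 0 = 1 := rfl

@[simp] lemma oneThenHalves_succ (i : Fin n) : oneThenHalves n i.succ = 1 / 2 := rfl

lemma oneThenHalves_mem_Icc (i : Fin (n + 1)) : oneThenHalves n i ∈ Icc 0 1 := by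
  cases i using Fin.cases <;> norm_num

lemma antitone_oneThenHalves : Antitone (oneThenHalves n) := by
  intro i j hij
  cases j using Fin.cases with
  | zero => rw [Fin.le_zero_iff.mp hij]
  | succ j => cases i using Fin.cases <;> norm_num

lemma le_pricingRegret_oneThenHalves (hf : Measurable f) (n : ℕ) :
    (1 - (1 - volume.real (cheapEarlyTimes f)) ^ n) / 4 ≤ pricingRegret f (oneThenHalves n) := by
  have hK : MeasurableSet (cheapEarlyTimes f) := measurableSet_cheapEarlyTimes hf
  set B : Set (Fin (n + 1) → ℝ) := {t | t 0 ∈ Ioc (1 / 2) 1 ∧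
    (∀ i : Fin n, t i.succ ∈ Icc 0 1) ∧ ∃ j : Fin n, t j.succ ∈ cheapEarlyTimes f}
  have hB : MeasurableSet B := by
    simp only [B, ofPred_and, ofPred_forall, ofPred_exists]
    exact (measurable_pi_apply 0 measurableSet_Ioc).inter
      ((MeasurableSet.iInter fun i => measurable_pi_apply _ measurableSet_Icc).inter
        (MeasurableSet.iUnion fun j => measurable_pi_apply _ hK))
  have hBC : B ⊆ univ.pi fun _ => Icc 0 1 := fun t ht => mem_univ_pi.mpr
    (Fin.cases (Ioc_subset_Icc_self.trans (Icc_subset_Icc (by norm_num) le_rfl) ht.1) ht.2.1)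
  have hb : ∀ t ∈ B, pricingReceived f (oneThenHalves n) t ≤ oneThenHalves n 0 - 1 / 2 := by
    rintro t ⟨h0, -, j, hjK, hfj⟩
    rw [oneThenHalves_zero, show (1 : ℝ) - 1 / 2 = 1 / 2 by norm_num]
    refine pricingReceived_le_of_clears_before (j := j.succ) (k := 0) (by simpa using hfj)
      (hjK.2.trans_lt h0.1) fun i hi => ?_
    cases i using Fin.cases with
    | zero => exact absurd rfl hi
    | succ i => simp
  have hdiff :
      volume.real (Icc 0 1 \ cheapEarlyTimes f) = 1 - volume.real (cheapEarlyTimes f) := by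
    rw [measureReal_sdiff (cheapEarlyTimes_subset.trans (Icc_subset_Icc le_rfl (by norm_num))) hK
      (by simp)]
    simp
  have hBvol : volume.real B = 1 / 2 * (1 - (1 - volume.real (cheapEarlyTimes f)) ^ n) := by
    rw [volume_real_cons_exists_mem measurableSet_Ioc measurableSet_Icc hK (by simp) (by simp),
      hdiff]
    norm_num
  have hreg := mul_volume_real_le_pricingRegret antitone_oneThenHalves
    (oneThenHalves_mem_Icc _).1 hB hBC hb
  rw [hBvol] at hreg
  linarith

end

theorem pricing_curve_regret_sup_ge_quarter_general (f : ℝ → ℝ) (hf : Measurable f) :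
    1 / 4 ≤ sSup {r : ℝ | ∃ (n : ℕ) (x : Fin (n + 1) → ℝ),
      Antitone x ∧ x 0 ≤ 1 ∧ 0 ≤ x (Fin.last n) ∧ r = pricingRegret f x} := by
  set S := {r : ℝ | ∃ (n : ℕ) (x : Fin (n + 1) → ℝ),
      Antitone x ∧ x 0 ≤ 1 ∧ 0 ≤ x (Fin.last n) ∧ r = pricingRegret f x}
  have hbdd : BddAbove S := ⟨1, by
    rintro r ⟨n, x, hx, hx0, hlast, rfl⟩
    exact (pricingRegret_le fun i => hlast.trans (hx (Fin.le_last i))).trans hx0⟩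
  have hmem : ∀ n (x : Fin (n + 1) → ℝ), Antitone x → (∀ i, x i ∈ Icc 0 1) →
      pricingRegret f x ≤ sSup S := fun n x hx hx01 =>
    le_csSup hbdd ⟨n, x, hx, (hx01 0).2, (hx01 _).1, rfl⟩
  set c := volume.real (cheapEarlyTimes f)
  rcases (measureReal_nonneg : 0 ≤ c).eq_or_lt with hc | hc
  · have := le_pricingRegret_const_half hf
    have := hmem 0 (fun _ => 1 / 2) antitone_const fun _ => ⟨by norm_num, by norm_num⟩
    linarith
  · have hlim : Tendsto (fun n : ℕ => (1 - (1 - c) ^ n) / 4) atTop (𝓝 (1 / 4)) := by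
      have hc' : c ≤ 1 / 2 := volume_real_cheapEarlyTimes_le
      have hpow := tendsto_pow_atTop_nhds_zero_of_lt_one (r := 1 - c) (by linarith) (by linarith)
      simpa using (hpow.const_sub 1).div_const 4
    exact le_of_tendsto' hlim fun n => (le_pricingRegret_oneThenHalves hf n).trans
      (hmem n _ antitone_oneThenHalves oneThenHalves_mem_Icc)

/-- For every Lebesgue-measurable threshold function `f : [0,1] → [0,1]`, the supremum
over all instances `1 ≥ x_1 ≥ … ≥ x_n ≥ 0` (with `n ≥ 1` values) of the regret of the
pricing curve with threshold `f` is at least `1/4`. -/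
theorem pricing_curve_regret_sup_ge_quarter (f : ℝ → ℝ) (hf : Measurable f)
    (hmap : ∀ t ∈ Set.Icc (0 : ℝ) 1, f t ∈ Set.Icc (0 : ℝ) 1) :
    1 / 4 ≤ sSup {r : ℝ | ∃ (n : ℕ) (x : Fin (n + 1) → ℝ),
      Antitone x ∧ x 0 ≤ 1 ∧ 0 ≤ x (Fin.last n) ∧ r = pricingRegret f x} :=
  pricing_curve_regret_sup_ge_quarter_general f hf
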